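/- arXiv:2507.12320 — 9 statements merged into one kernel-verified Lean document; each statement's English description precedes it below -/
import Mathlib

section
/- Every formula of modal substitution logic is semantically equivalent to a formula of basic modal logic: for each MSL-formula φ there exists an ML-formula φ' (containing no substitution operators) such that for every pointed Kripke model (M,s), M,s ⊨ φ iff M,s ⊨ φ'. -/
structure KModel (W : Type) where
  R : W → W → Prop
  V : ℕ → Set W

def KModel.update {W : Type} (M : KModel W) (p : ℕ) (S : Set W) : KModel W :=
  ⟨M.R, fun q => if q = p then S else M.V q⟩

inductive Form : Type where
  | atom : ℕ → Form
  | neg : Form → Form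
  | conj : Form → Form → Form
  | dia : Form → Form
  | sub : ℕ → Form → Form → Form
  | isub : ℕ → Form → Form → Form

def sat {W : Type} : KModel W → W → Form → Prop
  | M, w, .atom p => w ∈ M.V p
  | M, w, .neg φ => ¬ sat M w φ
  | M, w, .conj φ ψ => sat M w φ ∧ sat M w ψ
  | M, w, .dia φ => ∃ v, M.R w v ∧ sat M v φ
  | M, w, .sub p ψ φ => sat (M.update p {v | sat M v ψ}) w φ
  | M, w, .isub p ψ φ =>
      ∃ n : ℕ, sat (M.update p ((fun S => {v | sat (M.update p S) v ψ})^[n] (M.V p))) w φ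
termination_by M w φ => sizeOf φ
decreasing_by all_goals (simp_wf <;> omega)

def Form.isMSL : Form → Prop
  | .atom _ => True
  | .neg φ => φ.isMSL
  | .conj φ ψ => φ.isMSL ∧ ψ.isMSL
  | .dia φ => φ.isMSL
  | .sub _ ψ φ => ψ.isMSL ∧ φ.isMSL
  | .isub _ _ _ => False

def Form.isML : Form → Prop
  | .atom _ => True
  | .neg φ => φ.isML
  | .conj φ ψ => φ.isML ∧ ψ.isML
  | .dia φ => φ.isML
  | .sub _ _ _ => False
  | .isub _ _ _ => False

def occurs (q : ℕ) : Form → Prop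
  | .atom r => r = q
  | .neg φ => occurs q φ
  | .conj φ ψ => occurs q φ ∨ occurs q ψ
  | .dia φ => occurs q φ
  | .sub r χ φ => r = q ∨ occurs q χ ∨ occurs q φ
  | .isub r χ φ => r = q ∨ occurs q χ ∨ occurs q φ

/-- `repl p ψ φ` is `φ[ψ/p]`: replace every free occurrence of `p` in `φ` by `ψ`. -/
def repl (p : ℕ) (ψ : Form) : Form → Form
  | .atom r => if r = p then ψ else .atom r
  | .neg φ => .neg (repl p ψ φ)
  | .conj φ1 φ2 => .conj (repl p ψ φ1) (repl p ψ φ2)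
  | .dia φ => .dia (repl p ψ φ)
  | .sub q χ φ => if q = p then .sub q (repl p ψ χ) φ else .sub q (repl p ψ χ) (repl p ψ φ)
  | .isub q χ φ => if q = p then .isub q (repl p ψ χ) φ else .isub q (repl p ψ χ) (repl p ψ φ)

/-- free variables -/
def fv : Form → Set ℕ
  | .atom r => {r}
  | .neg φ => fv φ
  | .conj φ ψ => fv φ ∪ fv ψ
  | .dia φ => fv φ
  | .sub p χ φ => fv χ ∪ (fv φ \ {p})
  | .isub p χ φ => fv χ ∪ (fv φ \ {p})

/-- bound variables -/
def bv : Form → Set ℕ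
  | .atom _ => ∅
  | .neg φ => bv φ
  | .conj φ ψ => bv φ ∪ bv ψ
  | .dia φ => bv φ
  | .sub p χ φ => {p} ∪ bv χ ∪ bv φ
  | .isub p χ φ => {p} ∪ bv χ ∪ bv φ

def subf : Form → List Form
  | .atom r => [.atom r]
  | .neg φ => .neg φ :: subf φ
  | .conj φ ψ => .conj φ ψ :: (subf φ ++ subf ψ)
  | .dia φ => .dia φ :: subf φ
  | .sub p χ φ => .sub p χ φ :: (subf χ ++ subf φ)
  | .isub p χ φ => .isub p χ φ :: (subf χ ++ subf φ)

/-- clean: no variable occurs both free and bound, hereditarily in subformulas. -/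
def isClean (φ : Form) : Prop := ∀ ψ ∈ subf φ, fv ψ ∩ bv ψ = ∅

inductive Lt : Form → Form → Prop
  | neg (φ : Form) : Lt φ (.neg φ)
  | conjL (φ ψ : Form) : Lt φ (.conj φ ψ)
  | conjR (φ ψ : Form) : Lt φ (.conj ψ φ)
  | dia (φ : Form) : Lt φ (.dia φ)
  | sub (p : ℕ) (ψ φ : Form) : Lt (repl p ψ φ) (.sub p ψ φ)

structure IsBisim {W W' : Type} (M : KModel W) (M' : KModel W') (Z : W → W' → Prop) : Prop where
  atom : ∀ w w', Z w w' → ∀ p, (w ∈ M.V p ↔ w' ∈ M'.V p)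
  zig : ∀ w w', Z w w' → ∀ v, M.R w v → ∃ v', M'.R w' v' ∧ Z v v'
  zag : ∀ w w', Z w w' → ∀ v', M'.R w' v' → ∃ v, M.R w v ∧ Z v v'

/-- the `n`-fold iterated substitution update `M|_{(p:=ψ)^n}` -/
def iterUpd {W : Type} (M : KModel W) (p : ℕ) (ψ : Form) (n : ℕ) : KModel W :=
  M.update p ((fun S => {v | sat (M.update p S) v ψ})^[n] (M.V p))

/-- syntactic iterated single-step substitution `⟨(p:=ψ)^n⟩φ` -/
def subIter (p : ℕ) (ψ : Form) : ℕ → Form → Form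
  | 0, φ => φ
  | n+1, φ => .sub p ψ (subIter p ψ n φ)

def Win {W : Type} (M : KModel W) : ℕ → Set W
  | 0 => {s | ∀ t, ¬ M.R s t}
  | k+1 => (⋃ i ∈ Finset.range (k+1), Win M i) ∪
      {s | ∀ t, M.R s t → ∃ u, M.R t u ∧ u ∈ Win M k}
decreasing_by all_goals simp_all

lemma repl_isML {p : ℕ} {ψ φ : Form} (hψ : ψ.isML) (hφ : φ.isML) :
    (repl p ψ φ).isML := by
  induction φ with
  | atom r =>
    by_cases h : r = p <;> simp [repl, h, hψ, Form.isML]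
  | neg φ ih => exact ih hφ
  | conj φ1 φ2 ih1 ih2 => exact ⟨ih1 hφ.1, ih2 hφ.2⟩
  | dia φ ih => exact ih hφ
  | sub q χ φ _ _ => cases hφ
  | isub q χ φ _ _ => cases hφ

lemma key (p : ℕ) (ψ : Form) (φ : Form) (hφ : φ.isML) :
    ∀ (W : Type) (M : KModel W) (w : W),
      sat (M.update p {v | sat M v ψ}) w φ ↔ sat M w (repl p ψ φ) := by
  induction φ with
  | atom r =>
    intro W M w
    by_cases h : r = p <;> simp [sat, repl, h, KModel.update]
  | neg φ ih =>
    intro W M w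
    simp only [sat, repl]
    exact not_congr (ih hφ W M w)
  | conj φ1 φ2 ih1 ih2 =>
    intro W M w
    simp only [sat, repl]
    exact and_congr (ih1 hφ.1 W M w) (ih2 hφ.2 W M w)
  | dia φ ih =>
    intro W M w
    simp only [sat, repl, KModel.update]
    constructor
    · rintro ⟨v, hv, h⟩; exact ⟨v, hv, (ih hφ W M v).mp h⟩
    · rintro ⟨v, hv, h⟩; exact ⟨v, hv, (ih hφ W M v).mpr h⟩
  | sub q χ φ _ _ => cases hφ
  | isub q χ φ _ _ => cases hφ

theorem stmt6 (φ : Form) (hφ : φ.isMSL) :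
    ∃ φ' : Form, φ'.isML ∧ ∀ (W : Type) (M : KModel W) (s : W), sat M s φ ↔ sat M s φ' := by
  induction φ with
  | atom p => exact ⟨.atom p, trivial, fun _ _ _ => Iff.rfl⟩
  | neg φ ih =>
    obtain ⟨φ', h1, h2⟩ := ih hφ
    exact ⟨.neg φ', h1, fun W M s => by simp only [sat]; exact not_congr (h2 W M s)⟩
  | conj φ1 φ2 ih1 ih2 =>
    obtain ⟨φ1', h1, h2⟩ := ih1 hφ.1
    obtain ⟨φ2', h3, h4⟩ := ih2 hφ.2
    exact ⟨.conj φ1' φ2', ⟨h1, h3⟩,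
      fun W M s => by simp only [sat]; exact and_congr (h2 W M s) (h4 W M s)⟩
  | dia φ ih =>
    obtain ⟨φ', h1, h2⟩ := ih hφ
    refine ⟨.dia φ', h1, fun W M s => ?_⟩
    simp only [sat]
    exact exists_congr fun v => and_congr_right fun _ => h2 W M v
  | sub p ψ φ ihψ ihφ =>
    obtain ⟨ψ', hψ1, hψ2⟩ := ihψ hφ.1
    obtain ⟨φ', hφ1, hφ2⟩ := ihφ hφ.2
    refine ⟨repl p ψ' φ', repl_isML hψ1 hφ1, fun W M s => ?_⟩
    have hset : {v | sat M v ψ} = {v | sat M v ψ'} := Set.ext fun v => hψ2 W M v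
    calc sat M s (.sub p ψ φ) ↔ sat (M.update p {v | sat M v ψ}) s φ := by simp [sat]
      _ ↔ sat (M.update p {v | sat M v ψ'}) s φ := by rw [hset]
      _ ↔ sat (M.update p {v | sat M v ψ'}) s φ' := hφ2 W _ s
      _ ↔ sat M s (repl p ψ' φ') := key p ψ' φ' hφ1 W M s
  | isub p ψ φ _ _ => cases hφ
end

section
/- Bound variable renaming is valid for MSL: for any formula ⟨p:=ψ⟩φ and any propositional variable q not occurring in ⟨p:=ψ⟩φ, the formula ⟨p:=ψ⟩φ ↔ ⟨q:=ψ⟩(φ[q/p]) is valid, where φ[q/p] replaces every free occurrence of p in φ with q. -/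
theorem satAgree {W : Type} (φ : Form) : φ.isMSL →
    ∀ (M₁ M₂ : KModel W), M₁.R = M₂.R → (∀ r, occurs r φ → M₁.V r = M₂.V r) →
    ∀ w, sat M₁ w φ ↔ sat M₂ w φ := by
  induction φ with
  | atom r =>
    intro _ M₁ M₂ hR hV w
    simp [sat, hV r rfl]
  | neg φ ih =>
    intro h M₁ M₂ hR hV w
    simpa [sat] using not_congr (ih h M₁ M₂ hR hV w)
  | conj φ1 φ2 ih1 ih2 =>
    intro h M₁ M₂ hR hV w
    simp only [sat]
    exact and_congr (ih1 h.1 M₁ M₂ hR (fun r hr => hV r (Or.inl hr)) w)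
      (ih2 h.2 M₁ M₂ hR (fun r hr => hV r (Or.inr hr)) w)
  | dia φ ih =>
    intro h M₁ M₂ hR hV w
    simp only [sat, hR]
    exact exists_congr fun v => and_congr_right fun _ => ih h M₁ M₂ hR hV v
  | sub r χ φ ihχ ihφ =>
    intro h M₁ M₂ hR hV w
    have hS : {v | sat M₁ v χ} = {v | sat M₂ v χ} := by
      ext v; exact ihχ h.1 M₁ M₂ hR (fun s hs => hV s (Or.inr (Or.inl hs))) v
    simp only [sat, hS]
    apply ihφ h.2
    · exact hR
    · intro s hs
      by_cases hsr : s = r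
      · simp [KModel.update, hsr]
      · simp only [KModel.update, if_neg hsr]
        exact hV s (Or.inr (Or.inr hs))
  | isub r χ φ ihχ ihφ =>
    intro h; exact absurd h (by simp [Form.isMSL])

theorem satRepl {W : Type} (p q : ℕ) (hpq : p ≠ q) (φ : Form) : φ.isMSL → ¬ occurs q φ →
    ∀ (M₁ M₂ : KModel W), M₁.R = M₂.R → (∀ r, r ≠ p → r ≠ q → M₁.V r = M₂.V r) →
    M₁.V p = M₂.V q →
    ∀ w, sat M₁ w φ ↔ sat M₂ w (repl p (.atom q) φ) := by
  induction φ with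
  | atom r =>
    intro _ hq M₁ M₂ hR hV hpqV w
    by_cases hr : r = p
    · subst hr; simp [sat, repl, hpqV]
    · have hrq : r ≠ q := fun h => hq h
      simp [sat, repl, hr, hV r hr hrq]
  | neg φ ih =>
    intro h hq M₁ M₂ hR hV hpqV w
    simpa [sat, repl] using not_congr (ih h hq M₁ M₂ hR hV hpqV w)
  | conj φ1 φ2 ih1 ih2 =>
    intro h hq M₁ M₂ hR hV hpqV w
    simp only [sat, repl]
    exact and_congr (ih1 h.1 (fun h' => hq (Or.inl h')) M₁ M₂ hR hV hpqV w)
      (ih2 h.2 (fun h' => hq (Or.inr h')) M₁ M₂ hR hV hpqV w)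
  | dia φ ih =>
    intro h hq M₁ M₂ hR hV hpqV w
    simp only [sat, repl, hR]
    exact exists_congr fun v => and_congr_right fun _ => ih h hq M₁ M₂ hR hV hpqV v
  | sub r χ φ ihχ ihφ =>
    intro h hq M₁ M₂ hR hV hpqV w
    have hrq : r ≠ q := fun h' => hq (Or.inl h')
    have hqχ : ¬ occurs q χ := fun h' => hq (Or.inr (Or.inl h'))
    have hqφ : ¬ occurs q φ := fun h' => hq (Or.inr (Or.inr h'))
    have hS : {v | sat M₁ v χ} = {v | sat M₂ v (repl p (.atom q) χ)} := by
      ext v; exact ihχ h.1 hqχ M₁ M₂ hR hV hpqV v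
    by_cases hrp : r = p
    · subst hrp
      simp only [repl, sat, ite_true, eq_self_iff_true, ← hS]
      refine satAgree φ h.2 (M₁.update r _) (M₂.update r _) hR ?_ w
      intro s hs
      by_cases hsr : s = r
      · simp [KModel.update, hsr]
      · have hsq : s ≠ q := fun h' => hqφ (h' ▸ hs)
        simp only [KModel.update, if_neg hsr]
        exact hV s hsr hsq
    · simp only [repl, if_neg hrp, sat, ← hS]
      refine ihφ h.2 hqφ (M₁.update r _) (M₂.update r _) hR ?_ ?_ w
      · intro s hsp hsq
        by_cases hsr : s = r
        · simp [KModel.update, hsr]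
        · simp only [KModel.update, if_neg hsr]
          exact hV s hsp hsq
      · simp only [KModel.update, if_neg (fun h : p = r => hrp h.symm), if_neg (Ne.symm hrq)]
        exact hpqV
  | isub r χ φ ihχ ihφ =>
    intro h; exact absurd h (by simp [Form.isMSL])

theorem stmt7 (p q : ℕ) (ψ φ : Form) (hMSL : (Form.sub p ψ φ).isMSL)
    (hq : ¬ occurs q (.sub p ψ φ)) {W : Type} (M : KModel W) (w : W) :
    sat M w (.sub p ψ φ) ↔ sat M w (.sub q ψ (repl p (.atom q) φ)) := by
  have hpq : p ≠ q := fun h => hq (Or.inl h)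
  have hqψ : ¬ occurs q ψ := fun h => hq (Or.inr (Or.inl h))
  have hqφ : ¬ occurs q φ := fun h => hq (Or.inr (Or.inr h))
  simp only [sat]
  apply satRepl p q hpq φ hMSL.2 hqφ
  · rfl
  · intro r hrp hrq
    simp [KModel.update, hrp, hrq]
  · simp [KModel.update, Ne.symm hpq, hpq]
end

section
/- Stronger renaming lemma for MSL: let F=(W,R) be a frame, let q not occur in ⟨p:=ψ⟩φ, and let V1, V2 be valuations with V1(p)=V2(q) and V1(r)=V2(r) for all r distinct from p and q. Then for any MSL-formula φ, (W,R,V1),w ⊨ φ iff (W,R,V2),w ⊨ φ[q/p]. -/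
lemma coinc {W : Type} (R : W → W → Prop) :
    ∀ φ : Form, φ.isMSL → ∀ V1 V2 : ℕ → Set W,
      (∀ r, occurs r φ → V1 r = V2 r) → ∀ w,
      (sat ⟨R, V1⟩ w φ ↔ sat ⟨R, V2⟩ w φ)
  | .atom r, _, V1, V2, h, w => by
      simp [sat, h r rfl]
  | .neg φ, hm, V1, V2, h, w => by
      simp only [sat]
      exact not_congr (coinc R φ hm V1 V2 h w)
  | .conj φ1 φ2, hm, V1, V2, h, w => by
      simp only [sat]
      exact and_congr (coinc R φ1 hm.1 V1 V2 (fun r hr => h r (Or.inl hr)) w)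
        (coinc R φ2 hm.2 V1 V2 (fun r hr => h r (Or.inr hr)) w)
  | .dia φ, hm, V1, V2, h, w => by
      simp only [sat]
      exact exists_congr fun v => and_congr_right fun _ => coinc R φ hm V1 V2 h v
  | .sub r χ φ, hm, V1, V2, h, w => by
      simp only [sat]
      have hS : {v | sat ⟨R, V1⟩ v χ} = {v | sat ⟨R, V2⟩ v χ} := by
        ext v
        exact coinc R χ hm.1 V1 V2 (fun s hs => h s (Or.inr (Or.inl hs))) v
      simp only [KModel.update]
      exact coinc R φ hm.2 _ _ (fun s hs => by
        by_cases hsr : s = r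
        · simp only [if_pos hsr, hS]
        · simp only [if_neg hsr, h s (Or.inr (Or.inr hs))]) w

lemma key_s8 {W : Type} (R : W → W → Prop) (p q : ℕ) (hpq : p ≠ q) :
    ∀ φ : Form, φ.isMSL → ¬ occurs q φ → ∀ V1 V2 : ℕ → Set W,
      V1 p = V2 q → (∀ r, r ≠ p → r ≠ q → V1 r = V2 r) → ∀ w,
      (sat ⟨R, V1⟩ w φ ↔ sat ⟨R, V2⟩ w (repl p (.atom q) φ))
  | .atom r, _, hq, V1, V2, hVpq, hVr, w => by
      by_cases hrp : r = p
      · subst hrp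
        simp [repl, sat, hVpq]
      · have hrq : r ≠ q := hq
        simp [repl, hrp, sat, hVr r hrp hrq]
  | .neg φ, hm, hq, V1, V2, hVpq, hVr, w => by
      simp only [repl, sat]
      exact not_congr (key_s8 R p q hpq φ hm hq V1 V2 hVpq hVr w)
  | .conj φ1 φ2, hm, hq, V1, V2, hVpq, hVr, w => by
      simp only [repl, sat]
      exact and_congr
        (key_s8 R p q hpq φ1 hm.1 (fun h => hq (Or.inl h)) V1 V2 hVpq hVr w)
        (key_s8 R p q hpq φ2 hm.2 (fun h => hq (Or.inr h)) V1 V2 hVpq hVr w)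
  | .dia φ, hm, hq, V1, V2, hVpq, hVr, w => by
      simp only [repl, sat]
      exact exists_congr fun v => and_congr_right fun _ =>
        key_s8 R p q hpq φ hm hq V1 V2 hVpq hVr v
  | .sub r χ φ, hm, hq, V1, V2, hVpq, hVr, w => by
      have hrq : r ≠ q := fun h => hq (Or.inl h)
      have hqχ : ¬ occurs q χ := fun h => hq (Or.inr (Or.inl h))
      have hqφ : ¬ occurs q φ := fun h => hq (Or.inr (Or.inr h))
      have hS : {v | sat ⟨R, V1⟩ v χ} = {v | sat ⟨R, V2⟩ v (repl p (.atom q) χ)} := by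
        ext v
        exact key_s8 R p q hpq χ hm.1 hqχ V1 V2 hVpq hVr v
      by_cases hrp : r = p
      · subst hrp
        rw [show repl r (.atom q) (.sub r χ φ) = .sub r (repl r (.atom q) χ) φ from by
          simp [repl]]
        simp only [sat, KModel.update]
        exact coinc R φ hm.2 _ _ (fun s hs => by
          by_cases hsr : s = r
          · simp only [if_pos hsr, hS]
          · have hsq : s ≠ q := fun h => absurd (h ▸ hs) hqφ
            simp only [if_neg hsr, hVr s hsr hsq]) w
      · rw [show repl p (.atom q) (.sub r χ φ)
            = .sub r (repl p (.atom q) χ) (repl p (.atom q) φ) from by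
          simp [repl, hrp]]
        simp only [sat, KModel.update]
        exact key_s8 R p q hpq φ hm.2 hqφ _ _
          (by rw [if_neg (fun h : p = r => hrp h.symm),
                if_neg (fun h : q = r => hrq h.symm)]; exact hVpq)
          (fun s hsp hsq => by
            by_cases hsr : s = r
            · simp only [if_pos hsr, hS]
            · simp only [if_neg hsr, hVr s hsp hsq]) w

theorem stmt8 {W : Type} (R : W → W → Prop) (V1 V2 : ℕ → Set W) (p q : ℕ)
    (ψ φ : Form) (hMSL : (Form.sub p ψ φ).isMSL) (hq : ¬ occurs q (.sub p ψ φ))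
    (hpq : V1 p = V2 q) (hr : ∀ r, r ≠ p → r ≠ q → V1 r = V2 r) (w : W) :
    sat ⟨R, V1⟩ w φ ↔ sat ⟨R, V2⟩ w (repl p (.atom q) φ) :=
  key_s8 R p q (fun h => hq (Or.inl h)) φ hMSL.2 (fun h => hq (Or.inr (Or.inr h)))
    V1 V2 hpq hr w
end

section
/- For clean MSL formulas, semantic substitution coincides with syntactic replacement: if ⟨p:=ψ⟩φ is a clean formula (no propositional variable occurs both free and bound, hereditarily in subformulas), then ⟨p:=ψ⟩φ ↔ φ[ψ/p] is valid. -/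
lemma update_comm {W : Type} (M : KModel W) {p q : ℕ} (h : p ≠ q) (S T : Set W) :
    (M.update p S).update q T = (M.update q T).update p S := by
  unfold KModel.update
  simp only [KModel.mk.injEq, true_and]
  funext r
  by_cases hq : r = q <;> by_cases hp : r = p <;> simp_all

lemma mem_subf_self : ∀ φ : Form, φ ∈ subf φ := by
  intro φ; cases φ <;> simp [subf]

lemma coincide : ∀ (φ : Form), φ.isMSL → ∀ {W : Type} (M M' : KModel W),
    M.R = M'.R → (∀ q ∈ fv φ, M.V q = M'.V q) → ∀ w, (sat M w φ ↔ sat M' w φ) := by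
  intro φ
  induction φ with
  | atom r =>
    intro _ W M M' hR hV w
    simp only [sat]
    rw [hV r (by simp [fv])]
  | neg φ ih =>
    intro h W M M' hR hV w
    simp only [sat]
    rw [ih h M M' hR hV w]
  | conj φ1 φ2 ih1 ih2 =>
    intro h W M M' hR hV w
    simp only [sat]
    rw [ih1 h.1 M M' hR (fun q hq => hV q (Or.inl hq)) w,
        ih2 h.2 M M' hR (fun q hq => hV q (Or.inr hq)) w]
  | dia φ ih =>
    intro h W M M' hR hV w
    simp only [sat, hR]
    exact exists_congr fun v => and_congr_right fun _ => ih h M M' hR hV v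
  | sub q χ φ ihχ ihφ =>
    intro h W M M' hR hV w
    simp only [sat]
    apply ihφ h.2
    · exact hR
    · intro r hr
      by_cases hrq : r = q
      · subst hrq
        simp only [KModel.update, if_pos rfl]
        ext v
        exact ihχ h.1 M M' hR (fun s hs => hV s (Or.inl hs)) v
      · simp only [KModel.update, if_neg hrq]
        exact hV r (Or.inr ⟨hr, hrq⟩)
  | isub q χ φ _ _ => intro h; exact absurd h (by simp [Form.isMSL])

lemma repl_nonfree (p : ℕ) (ψ : Form) : ∀ φ, p ∉ fv φ → repl p ψ φ = φ := by
  intro φ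
  induction φ with
  | atom r =>
    intro h
    have : r ≠ p := fun hrp => h (by simp [fv, hrp])
    simp [repl, this]
  | neg φ ih => intro h; simp [repl, ih h]
  | conj φ1 φ2 ih1 ih2 =>
    intro h
    simp only [fv, Set.mem_union, not_or] at h
    simp [repl, ih1 h.1, ih2 h.2]
  | dia φ ih => intro h; simp [repl, ih h]
  | sub q χ φ ihχ ihφ =>
    intro h
    simp only [fv, Set.mem_union, Set.mem_diff, Set.mem_singleton_iff, not_or, not_and,
      not_not] at h
    by_cases hqp : q = p
    · simp [repl, hqp, ihχ h.1]
    · have hpφ : p ∉ fv φ := fun hp => hqp ((h.2 hp).symm)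
      simp [repl, hqp, ihχ h.1, ihφ hpφ]
  | isub q χ φ ihχ ihφ =>
    intro h
    simp only [fv, Set.mem_union, Set.mem_diff, Set.mem_singleton_iff, not_or, not_and,
      not_not] at h
    by_cases hqp : q = p
    · simp [repl, hqp, ihχ h.1]
    · have hpφ : p ∉ fv φ := fun hp => hqp ((h.2 hp).symm)
      simp [repl, hqp, ihχ h.1, ihφ hpφ]

lemma mainlem (p : ℕ) (ψ : Form) (hψ : ψ.isMSL) :
    ∀ φ, φ.isMSL → p ∉ bv φ → (∀ q ∈ fv ψ, q ∉ bv φ) →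
    ∀ {W : Type} (M : KModel W) (w : W),
    sat (M.update p {v | sat M v ψ}) w φ ↔ sat M w (repl p ψ φ) := by
  intro φ
  induction φ with
  | atom r =>
    intro _ _ _ W M w
    by_cases hrp : r = p
    · subst hrp; simp [sat, repl, KModel.update]
    · simp [sat, repl, hrp, KModel.update]
  | neg φ ih =>
    intro h hb hfb W M w
    simp only [sat, repl]
    rw [ih h hb hfb M w]
  | conj φ1 φ2 ih1 ih2 =>
    intro h hb hfb W M w
    simp only [bv, Set.mem_union, not_or] at hb
    simp only [sat, repl]
    rw [ih1 h.1 hb.1 (fun q hq hc => hfb q hq (Or.inl hc)) M w,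
        ih2 h.2 hb.2 (fun q hq hc => hfb q hq (Or.inr hc)) M w]
  | dia φ ih =>
    intro h hb hfb W M w
    simp only [sat, repl]
    exact exists_congr fun v => and_congr_right fun _ => ih h hb hfb M v
  | sub q χ φ ihχ ihφ =>
    intro h hb hfb W M w
    simp only [bv, Set.mem_union, Set.mem_singleton_iff, not_or] at hb
    have hpq : p ≠ q := hb.1.1
    have hqψ : q ∉ fv ψ := fun hq => (hfb q hq) (Or.inl (Or.inl rfl))
    have hfbχ : ∀ r ∈ fv ψ, r ∉ bv χ := fun r hr hc => (hfb r hr) (Or.inl (Or.inr hc))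
    have hfbφ : ∀ r ∈ fv ψ, r ∉ bv φ := fun r hr hc => (hfb r hr) (Or.inr hc)
    simp only [sat, repl, if_neg (Ne.symm hpq)]
    set S : Set W := {v | sat M v ψ} with hS
    set T : Set W := {v | sat M v (repl p ψ χ)} with hT
    have hTeq : {v | sat (M.update p S) v χ} = T := by
      ext v; exact ihχ h.1 hb.1.2 hfbχ M v
    rw [hTeq, update_comm M hpq S T]
    have hSeq : S = {v | sat (M.update q T) v ψ} := by
      ext v
      exact coincide ψ hψ M (M.update q T) rfl
        (fun r hr => by simp [KModel.update, if_neg (show r ≠ q from fun h => hqψ (h ▸ hr))]) v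
    rw [hSeq]
    exact ihφ h.2 hb.2 hfbφ (M.update q T) w
  | isub q χ φ _ _ => intro h; exact absurd h (by simp [Form.isMSL])

theorem stmt9 (p : ℕ) (ψ φ : Form) (hMSL : (Form.sub p ψ φ).isMSL)
    (hclean : isClean (.sub p ψ φ)) {W : Type} (M : KModel W) (w : W) :
    sat M w (.sub p ψ φ) ↔ sat M w (repl p ψ φ) := by
  have hψMSL : ψ.isMSL := hMSL.1
  have hφMSL : φ.isMSL := hMSL.2
  by_cases hp : p ∈ fv φ
  · have hφclean := hclean φ (by simp [subf, mem_subf_self])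
    have htop := hclean (.sub p ψ φ) (mem_subf_self _)
    have hpb : p ∉ bv φ := fun hb =>
      Set.eq_empty_iff_forall_notMem.mp hφclean p ⟨hp, hb⟩
    have hfb : ∀ q ∈ fv ψ, q ∉ bv φ := fun q hq hb =>
      Set.eq_empty_iff_forall_notMem.mp htop q
        ⟨Or.inl hq, Or.inr hb⟩
    simp only [sat]
    exact mainlem p ψ hψMSL φ hφMSL hpb hfb M w
  · rw [repl_nonfree p ψ φ hp]
    simp only [sat]
    exact coincide φ hφMSL (M.update p {v | sat M v ψ}) M rfl
      (fun q hq => by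
        simp [KModel.update, if_neg (show q ≠ p from fun h => hp (h ▸ hq))]) w
end

section
/- The order ≪ on clean MSL formulas generated by: φ ≪ ¬φ; φ ≪ φ∧ψ; φ ≪ ψ∧φ; φ ≪ ◇φ; and φ[ψ/p] ≪ ⟨p:=ψ⟩φ, is well-founded. -/
/-- count of free occurrences (weighted through substitutions) -/
def cnt (q : ℕ) : Form → ℕ
  | .atom r => if r = q then 1 else 0
  | .neg φ => cnt q φ
  | .conj a b => cnt q a + cnt q b
  | .dia φ => cnt q φ
  | .sub p χ φ => (if p = q then 0 else cnt q φ) + cnt p φ * cnt q χ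
  | .isub p χ φ => (if p = q then 0 else cnt q φ) + cnt p φ * cnt q χ

def wt : Form → ℕ
  | .atom _ => 1
  | .neg φ => wt φ + 1
  | .conj a b => wt a + wt b + 1
  | .dia φ => wt φ + 1
  | .sub p χ φ => wt φ + cnt p φ * wt χ + 1
  | .isub p χ φ => wt φ + cnt p φ * wt χ + 1

lemma cnt_eq_zero_of_not_fv (q : ℕ) : ∀ ψ : Form, q ∉ fv ψ → cnt q ψ = 0 := by
  intro ψ
  induction ψ with
  | atom r =>
      intro h
      simp [fv] at h
      simp [cnt, Ne.symm h]
  | neg φ ih => intro h; exact ih h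
  | conj a b iha ihb =>
      intro h
      simp only [fv, Set.mem_union] at h
      push_neg at h
      simp [cnt, iha h.1, ihb h.2]
  | dia φ ih => intro h; exact ih h
  | sub p χ φ ihχ ihφ =>
      intro h
      simp only [fv, Set.mem_union, Set.mem_diff, Set.mem_singleton_iff] at h
      push_neg at h
      rcases h with ⟨hχ, hφ⟩
      by_cases hpq : p = q
      · simp [cnt, hpq, ihχ hχ]
      · simp [cnt, hpq, ihχ hχ, ihφ (fun hq => hpq (hφ hq).symm)]
  | isub p χ φ ihχ ihφ =>
      intro h
      simp only [fv, Set.mem_union, Set.mem_diff, Set.mem_singleton_iff] at h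
      push_neg at h
      rcases h with ⟨hχ, hφ⟩
      by_cases hpq : p = q
      · simp [cnt, hpq, ihχ hχ]
      · simp [cnt, hpq, ihχ hχ, ihφ (fun hq => hpq (hφ hq).symm)]

lemma cnt_repl_le (p : ℕ) (ψ : Form) : ∀ φ : Form, (∀ r ∈ bv φ, cnt r ψ = 0) →
    ∀ q : ℕ, cnt q ψ = 0 → cnt q (repl p ψ φ) ≤ cnt q φ := by
  intro φ
  induction φ with
  | atom r =>
      intro _ q hq
      by_cases h : r = p
      · simp [repl, h, hq]
      · simp [repl, h]
  | neg φ ih => intro hb q hq; exact ih hb q hq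
  | conj a b iha ihb =>
      intro hb q hq
      have hba : ∀ r ∈ bv a, cnt r ψ = 0 := fun r hr => hb r (Or.inl hr)
      have hbb : ∀ r ∈ bv b, cnt r ψ = 0 := fun r hr => hb r (Or.inr hr)
      simpa [repl, cnt] using Nat.add_le_add (iha hba q hq) (ihb hbb q hq)
  | dia φ ih => intro hb q hq; exact ih hb q hq
  | sub r χ φ' ihχ ihφ =>
      intro hb q hq
      have hbχ : ∀ s ∈ bv χ, cnt s ψ = 0 := fun s hs => hb s (by simp [bv]; tauto)
      have hbφ : ∀ s ∈ bv φ', cnt s ψ = 0 := fun s hs => hb s (by simp [bv]; tauto)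
      have hrψ : cnt r ψ = 0 := hb r (by simp [bv])
      by_cases h : r = p
      · simp only [repl, h, if_pos rfl, cnt]
        exact Nat.add_le_add le_rfl (Nat.mul_le_mul_left _ (ihχ hbχ q hq))
      · simp only [repl, h, if_neg h, cnt]
        exact Nat.add_le_add
          (by split <;> [exact le_rfl; exact ihφ hbφ q hq])
          (Nat.mul_le_mul (ihφ hbφ r hrψ) (ihχ hbχ q hq))
  | isub r χ φ' ihχ ihφ =>
      intro hb q hq
      have hbχ : ∀ s ∈ bv χ, cnt s ψ = 0 := fun s hs => hb s (by simp [bv]; tauto)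
      have hbφ : ∀ s ∈ bv φ', cnt s ψ = 0 := fun s hs => hb s (by simp [bv]; tauto)
      have hrψ : cnt r ψ = 0 := hb r (by simp [bv])
      by_cases h : r = p
      · simp only [repl, h, if_pos rfl, cnt]
        exact Nat.add_le_add le_rfl (Nat.mul_le_mul_left _ (ihχ hbχ q hq))
      · simp only [repl, h, if_neg h, cnt]
        exact Nat.add_le_add
          (by split <;> [exact le_rfl; exact ihφ hbφ q hq])
          (Nat.mul_le_mul (ihφ hbφ r hrψ) (ihχ hbχ q hq))

lemma wt_repl_le (p : ℕ) (ψ : Form) : ∀ φ : Form, (∀ r ∈ bv φ, cnt r ψ = 0) →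
    wt (repl p ψ φ) ≤ wt φ + cnt p φ * wt ψ := by
  intro φ
  induction φ with
  | atom r =>
      intro _
      by_cases h : r = p
      · simp [repl, h, wt, cnt]
      · simp [repl, h, wt, cnt, Ne.symm h]
  | neg φ ih =>
      intro hb
      have := ih hb
      simp only [repl, wt, cnt]
      omega
  | conj a b iha ihb =>
      intro hb
      have ha := iha (fun r hr => hb r (Or.inl hr))
      have hbb := ihb (fun r hr => hb r (Or.inr hr))
      simp only [repl, wt, cnt, Nat.add_mul]
      omega
  | dia φ ih =>
      intro hb
      have := ih hb
      simp only [repl, wt, cnt]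
      omega
  | sub r χ φ' ihχ ihφ =>
      intro hb
      have hbχ : ∀ s ∈ bv χ, cnt s ψ = 0 := fun s hs => hb s (by simp [bv]; tauto)
      have hbφ : ∀ s ∈ bv φ', cnt s ψ = 0 := fun s hs => hb s (by simp [bv]; tauto)
      have hrψ : cnt r ψ = 0 := hb r (by simp [bv])
      have hχ := ihχ hbχ
      have hφ := ihφ hbφ
      by_cases h : r = p
      · subst h
        simp only [repl, wt, cnt, if_pos rfl, eq_self_iff_true, if_true]
        nlinarith [Nat.mul_le_mul_left (cnt r φ') hχ]
      · have hc : cnt r (repl p ψ φ') ≤ cnt r φ' := cnt_repl_le p ψ φ' hbφ r hrψ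
        simp only [repl, wt, cnt, if_neg h]
        nlinarith [Nat.mul_le_mul hc hχ, hφ]
  | isub r χ φ' ihχ ihφ =>
      intro hb
      have hbχ : ∀ s ∈ bv χ, cnt s ψ = 0 := fun s hs => hb s (by simp [bv]; tauto)
      have hbφ : ∀ s ∈ bv φ', cnt s ψ = 0 := fun s hs => hb s (by simp [bv]; tauto)
      have hrψ : cnt r ψ = 0 := hb r (by simp [bv])
      have hχ := ihχ hbχ
      have hφ := ihφ hbφ
      by_cases h : r = p
      · subst h
        simp only [repl, wt, cnt, if_pos rfl, eq_self_iff_true, if_true]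
        nlinarith [Nat.mul_le_mul_left (cnt r φ') hχ]
      · have hc : cnt r (repl p ψ φ') ≤ cnt r φ' := cnt_repl_le p ψ φ' hbφ r hrψ
        simp only [repl, wt, cnt, if_neg h]
        nlinarith [Nat.mul_le_mul hc hχ, hφ]

lemma wt_lt_of_Lt {a b : Form} (h : Lt a b) (hc : isClean b) : wt a < wt b := by
  cases h with
  | neg φ => simp [wt]
  | conjL φ ψ => simp [wt]
  | conjR φ ψ => simp [wt]
  | dia φ => simp [wt]
  | sub p ψ φ =>
      have hself : fv (Form.sub p ψ φ) ∩ bv (Form.sub p ψ φ) = ∅ :=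
        hc _ (by simp [subf])
      have hb : ∀ r ∈ bv φ, cnt r ψ = 0 := by
        intro r hr
        apply cnt_eq_zero_of_not_fv
        intro hfv
        have : r ∈ fv (Form.sub p ψ φ) ∩ bv (Form.sub p ψ φ) := by
          constructor
          · exact Or.inl hfv
          · simp [bv]; tauto
        rw [hself] at this
        exact this
      have := wt_repl_le p ψ φ hb
      simp only [wt]
      omega

theorem stmt10 :
    WellFounded (fun a b : {φ : Form // φ.isMSL ∧ isClean φ} => Lt a.1 b.1) := by
  exact Subrelation.wf
    (fun {a b} h => show InvImage (· < ·) (fun x : {φ : Form // φ.isMSL ∧ isClean φ} => wt x.1) a b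
      from wt_lt_of_Lt h b.2.2)
    (InvImage.wf _ Nat.lt_wfRel.wf)
end

section
/- For clean MSL formulas, replacement preserves the ordering: if ⟨p:=ψ⟩φ and ⟨p:=ψ⟩χ are clean and φ ≫ χ, then φ[ψ/p] ≫ χ[ψ/p], where ≫ is the converse of the one-step subformula/unfolding order on clean MSL formulas. -/
lemma repl_of_not_fv (q : ℕ) (χ : Form) : ∀ θ : Form, q ∉ fv θ → repl q χ θ = θ := by
  intro θ
  induction θ with
  | atom r =>
      intro h
      have hne : ¬ r = q := fun e => h (by simp [fv, e])
      simp [repl, hne]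
  | neg φ ih => intro h; simp only [fv] at h; simp [repl, ih h]
  | conj φ1 φ2 ih1 ih2 =>
      intro h; simp only [fv, Set.mem_union] at h; push_neg at h
      simp [repl, ih1 h.1, ih2 h.2]
  | dia φ ih => intro h; simp only [fv] at h; simp [repl, ih h]
  | sub r cc body ihc ihb =>
      intro h; simp only [fv, Set.mem_union, Set.mem_diff, Set.mem_singleton_iff] at h
      push_neg at h
      by_cases hr : r = q
      · simp [repl, hr, ihc h.1]
      · have : q ∉ fv body := fun hq => hr (h.2 hq).symm
        simp [repl, hr, ihc h.1, ihb this]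
  | isub r cc body ihc ihb =>
      intro h; simp only [fv, Set.mem_union, Set.mem_diff, Set.mem_singleton_iff] at h
      push_neg at h
      by_cases hr : r = q
      · simp [repl, hr, ihc h.1]
      · have : q ∉ fv body := fun hq => hr (h.2 hq).symm
        simp [repl, hr, ihc h.1, ihb this]

lemma repl_repl_same (p : ℕ) (ψ χ : Form) :
    ∀ θ : Form, repl p ψ (repl p χ θ) = repl p (repl p ψ χ) θ := by
  intro θ
  induction θ with
  | atom r =>
      by_cases hr : r = p
      · simp [repl, hr]
      · simp [repl, hr]
  | neg φ ih => simp [repl, ih]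
  | conj φ1 φ2 ih1 ih2 => simp [repl, ih1, ih2]
  | dia φ ih => simp [repl, ih]
  | sub r cc body ihc ihb =>
      by_cases hr : r = p
      · simp [repl, hr, ihc]
      · simp [repl, hr, ihc, ihb]
  | isub r cc body ihc ihb =>
      by_cases hr : r = p
      · simp [repl, hr, ihc]
      · simp [repl, hr, ihc, ihb]

lemma repl_comm (p q : ℕ) (ψ χ : Form) (hpq : p ≠ q) (hqψ : q ∉ fv ψ) :
    ∀ θ : Form, (p ∈ bv θ → p ∉ fv χ) →
      repl p ψ (repl q χ θ) = repl q (repl p ψ χ) (repl p ψ θ) := by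
  intro θ
  induction θ with
  | atom r =>
      intro _
      have hqp : ¬ q = p := fun e => hpq e.symm
      by_cases hrq : r = q
      · have hrp : ¬ r = p := by rw [hrq]; exact hqp
        simp [repl, hrq, hrp, hqp]
      · by_cases hrp : r = p
        · simp [repl, hrq, hrp, hpq, hqp, repl_of_not_fv q (repl p ψ χ) ψ hqψ]
        · simp [repl, hrq, hrp]
  | neg φ ih => intro hb; simp only [bv] at hb; simp [repl, ih hb]
  | conj φ1 φ2 ih1 ih2 =>
      intro hb; simp only [bv, Set.mem_union] at hb
      simp [repl, ih1 (fun h => hb (Or.inl h)), ih2 (fun h => hb (Or.inr h))]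
  | dia φ ih => intro hb; simp only [bv] at hb; simp [repl, ih hb]
  | sub r cc body ihc ihb =>
      intro hb
      simp only [bv, Set.mem_union, Set.mem_singleton_iff] at hb
      have hbc : p ∈ bv cc → p ∉ fv χ := fun h => hb (Or.inl (Or.inr h))
      have hbb : p ∈ bv body → p ∉ fv χ := fun h => hb (Or.inr h)
      have hqp : ¬ q = p := fun e => hpq e.symm
      by_cases hrq : r = q
      · have hrp : ¬ r = p := by rw [hrq]; exact hqp
        simp [repl, hrq, hrp, hqp, ihc hbc]
      · by_cases hrp : r = p
        · have hpχ : p ∉ fv χ := hb (Or.inl (Or.inl hrp.symm))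
          simp [repl, hrq, hrp, hpq, hqp, ihc hbc, repl_of_not_fv p ψ χ hpχ]
        · simp [repl, hrq, hrp, ihc hbc, ihb hbb]
  | isub r cc body ihc ihb =>
      intro hb
      simp only [bv, Set.mem_union, Set.mem_singleton_iff] at hb
      have hbc : p ∈ bv cc → p ∉ fv χ := fun h => hb (Or.inl (Or.inr h))
      have hbb : p ∈ bv body → p ∉ fv χ := fun h => hb (Or.inr h)
      have hqp : ¬ q = p := fun e => hpq e.symm
      by_cases hrq : r = q
      · have hrp : ¬ r = p := by rw [hrq]; exact hqp
        simp [repl, hrq, hrp, hqp, ihc hbc]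
      · by_cases hrp : r = p
        · have hpχ : p ∉ fv χ := hb (Or.inl (Or.inl hrp.symm))
          simp [repl, hrq, hrp, hpq, hqp, ihc hbc, repl_of_not_fv p ψ χ hpχ]
        · simp [repl, hrq, hrp, ihc hbc, ihb hbb]

theorem stmt11 (p : ℕ) (ψ φ χ : Form)
    (hMSLφ : (Form.sub p ψ φ).isMSL) (hMSLχ : (Form.sub p ψ χ).isMSL)
    (hcφ : isClean (.sub p ψ φ)) (hcχ : isClean (.sub p ψ χ))
    (h : Lt χ φ) : Lt (repl p ψ χ) (repl p ψ φ) := by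
  cases h with
  | neg _ => simpa [repl] using Lt.neg (repl p ψ χ)
  | conjL _ b => simpa [repl] using Lt.conjL (repl p ψ χ) (repl p ψ b)
  | conjR _ b => simpa [repl] using Lt.conjR (repl p ψ χ) (repl p ψ b)
  | dia _ => simpa [repl] using Lt.dia (repl p ψ χ)
  | sub q χ' χ0 =>
      by_cases hq : q = p
      · subst hq
        have e1 : repl q ψ (Form.sub q χ' χ0) = Form.sub q (repl q ψ χ') χ0 := by
          simp [repl]
        rw [e1, repl_repl_same]
        exact Lt.sub q (repl q ψ χ') χ0
      · have e1 : repl p ψ (Form.sub q χ' χ0)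
            = Form.sub q (repl p ψ χ') (repl p ψ χ0) := by
          simp [repl, hq]
        have hself : Form.sub p ψ (Form.sub q χ' χ0)
            ∈ subf (Form.sub p ψ (Form.sub q χ' χ0)) := by simp [subf]
        have hsub : Form.sub q χ' χ0 ∈ subf (Form.sub p ψ (Form.sub q χ' χ0)) := by
          simp [subf]
        have hwhole := hcφ _ hself
        have hinner := hcφ _ hsub
        have hqψ : q ∉ fv ψ := by
          intro hqfv
          have hfv : q ∈ fv (Form.sub p ψ (Form.sub q χ' χ0)) := by
            simp only [fv, Set.mem_union]; tauto
          have hbv : q ∈ bv (Form.sub p ψ (Form.sub q χ' χ0)) := by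
            simp only [bv, Set.mem_union, Set.mem_singleton_iff]; tauto
          have : q ∈ (∅ : Set ℕ) := hwhole ▸ Set.mem_inter hfv hbv
          exact this
        have hbvc : p ∈ bv χ0 → p ∉ fv χ' := by
          intro hpb hpf
          have hfv : p ∈ fv (Form.sub q χ' χ0) := by
            simp only [fv, Set.mem_union]; tauto
          have hbv : p ∈ bv (Form.sub q χ' χ0) := by
            simp only [bv, Set.mem_union]; tauto
          have : p ∈ (∅ : Set ℕ) := hinner ▸ Set.mem_inter hfv hbv
          exact this
        rw [e1, repl_comm p q ψ χ' (fun h => hq h.symm) hqψ χ0 hbvc]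
        exact Lt.sub q (repl p ψ χ') (repl p ψ χ0)
end

section
/- Truth of MISL formulas is invariant under standard bisimulation: if (M,s) and (M',s') are bisimilar (in the standard sense for basic modal logic), then for every MISL-formula φ, M,s ⊨ φ iff M',s' ⊨ φ. -/
theorem bisim_inv : ∀ (φ : Form) {W W' : Type} (M : KModel W) (M' : KModel W')
    (Z : W → W' → Prop), IsBisim M M' Z → ∀ w w', Z w w' →
    (sat M w φ ↔ sat M' w' φ) := by
  intro φ
  induction φ with
  | atom p =>
    intro W W' M M' Z h w w' hw
    simp only [sat]
    exact h.atom w w' hw p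
  | neg φ ih =>
    intro W W' M M' Z h w w' hw
    simp only [sat]
    exact not_congr (ih M M' Z h w w' hw)
  | conj φ ψ ihφ ihψ =>
    intro W W' M M' Z h w w' hw
    simp only [sat]
    exact and_congr (ihφ M M' Z h w w' hw) (ihψ M M' Z h w w' hw)
  | dia φ ih =>
    intro W W' M M' Z h w w' hw
    simp only [sat]
    constructor
    · rintro ⟨v, hR, hv⟩
      obtain ⟨v', hR', hZ⟩ := h.zig w w' hw v hR
      exact ⟨v', hR', (ih M M' Z h v v' hZ).mp hv⟩
    · rintro ⟨v', hR', hv'⟩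
      obtain ⟨v, hR, hZ⟩ := h.zag w w' hw v' hR'
      exact ⟨v, hR, (ih M M' Z h v v' hZ).mpr hv'⟩
  | sub p ψ φ ihψ ihφ =>
    intro W W' M M' Z h w w' hw
    simp only [sat]
    apply ihφ _ _ Z _ w w' hw
    refine ⟨?_, h.zig, h.zag⟩
    intro v v' hv q
    simp only [KModel.update]
    by_cases hq : q = p <;> simp only [hq, if_pos, if_neg, ite_true, ite_false]
    · exact ihψ M M' Z h v v' hv
    · exact h.atom v v' hv q
  | isub p ψ φ ihψ ihφ =>
    intro W W' M M' Z h w w' hw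
    simp only [sat]
    have key : ∀ n : ℕ, IsBisim
        (M.update p ((fun S => {v | sat (M.update p S) v ψ})^[n] (M.V p)))
        (M'.update p ((fun S => {v | sat (M'.update p S) v ψ})^[n] (M'.V p))) Z := by
      intro n
      induction n with
      | zero =>
        refine ⟨?_, h.zig, h.zag⟩
        intro v v' hv q
        simp only [Function.iterate_zero, id_eq, KModel.update]
        by_cases hq : q = p <;> simp only [hq, ite_true, ite_false]
        · exact h.atom v v' hv p
        · exact h.atom v v' hv q
      | succ n ihn =>
        refine ⟨?_, h.zig, h.zag⟩
        intro v v' hv q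
        simp only [Function.iterate_succ_apply', KModel.update]
        by_cases hq : q = p <;> simp only [hq, ite_true, ite_false]
        · exact ihψ _ _ Z ihn v v' hv
        · exact h.atom v v' hv q
    exact exists_congr fun n => ihφ _ _ Z (key n) w w' hw

theorem stmt12 {W W' : Type} (M : KModel W) (M' : KModel W') (Z : W → W' → Prop)
    (h : IsBisim M M' Z) (s : W) (s' : W') (hs : Z s s') (φ : Form) :
    sat M s φ ↔ sat M' s' φ :=
  bisim_inv φ M M' Z h s s' hs
end

section
/- If (M,s) and (M',s') are bisimilar pointed Kripke models, then for every formula ψ of modal substitution logic and every n ∈ ℕ, the n-fold updated models are bisimilar at corresponding points: (M|_{(p:=ψ)^n}, t) and (M'|_{(p:=ψ)^n}, t') are bisimilar for every pair (t,t') in the bisimulation. -/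
lemma bisim_update {W W' : Type} {M : KModel W} {M' : KModel W'} {Z : W → W' → Prop}
    (h : IsBisim M M' Z) (p : ℕ) (S : Set W) (S' : Set W')
    (hS : ∀ w w', Z w w' → (w ∈ S ↔ w' ∈ S')) :
    IsBisim (M.update p S) (M'.update p S') Z := by
  constructor
  · intro w w' hz q
    simp only [KModel.update]
    by_cases hq : q = p <;> simp [hq, hS w w' hz, h.atom w w' hz q]
  · exact h.zig
  · exact h.zag

lemma msl_invariance (φ : Form) (hφ : φ.isMSL) :
    ∀ {W W' : Type} (M : KModel W) (M' : KModel W') (Z : W → W' → Prop),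
      IsBisim M M' Z → ∀ w w', Z w w' → (sat M w φ ↔ sat M' w' φ) := by
  induction φ with
  | atom q =>
    intro W W' M M' Z h w w' hz
    simpa [sat] using h.atom w w' hz q
  | neg φ ih =>
    intro W W' M M' Z h w w' hz
    simp [sat, ih hφ M M' Z h w w' hz]
  | conj φ1 φ2 ih1 ih2 =>
    intro W W' M M' Z h w w' hz
    simp [sat, ih1 hφ.1 M M' Z h w w' hz, ih2 hφ.2 M M' Z h w w' hz]
  | dia φ ih =>
    intro W W' M M' Z h w w' hz
    simp only [sat]
    constructor
    · rintro ⟨v, hv, hsat⟩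
      obtain ⟨v', hv', hz'⟩ := h.zig w w' hz v hv
      exact ⟨v', hv', (ih hφ M M' Z h v v' hz').mp hsat⟩
    · rintro ⟨v', hv', hsat⟩
      obtain ⟨v, hv, hz'⟩ := h.zag w w' hz v' hv'
      exact ⟨v, hv, (ih hφ M M' Z h v v' hz').mpr hsat⟩
  | sub q χ φ ihχ ihφ =>
    intro W W' M M' Z h w w' hz
    simp only [sat]
    have hb : IsBisim (M.update q {v | sat M v χ}) (M'.update q {v | sat M' v χ}) Z :=
      bisim_update h q _ _ (fun v v' hz' => ihχ hφ.1 M M' Z h v v' hz')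
    exact ihφ hφ.2 _ _ Z hb w w' hz
  | isub q χ φ _ _ =>
    exact absurd hφ (by simp [Form.isMSL])

lemma bisim_iterUpd {W W' : Type} {M : KModel W} {M' : KModel W'} {Z : W → W' → Prop}
    (h : IsBisim M M' Z) (p : ℕ) (ψ : Form) (hψ : ψ.isMSL) (n : ℕ) :
    IsBisim (iterUpd M p ψ n) (iterUpd M' p ψ n) Z := by
  induction n with
  | zero =>
    refine bisim_update h p _ _ (fun w w' hz => ?_)
    simpa using h.atom w w' hz p
  | succ n ih =>
    have key : ∀ w w', Z w w' →
        (w ∈ (fun S => {v | sat (M.update p S) v ψ})^[n+1] (M.V p) ↔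
         w' ∈ (fun S => {v | sat (M'.update p S) v ψ})^[n+1] (M'.V p)) := by
      intro w w' hz
      rw [Function.iterate_succ_apply', Function.iterate_succ_apply']
      exact msl_invariance ψ hψ _ _ Z ih w w' hz
    exact bisim_update h p _ _ key

theorem stmt13 {W W' : Type} (M : KModel W) (M' : KModel W') (Z : W → W' → Prop)
    (h : IsBisim M M' Z) (s : W) (s' : W') (hs : Z s s')
    (p : ℕ) (ψ : Form) (hψ : ψ.isMSL) (n : ℕ) (t : W) (t' : W') (ht : Z t t') :
    ∃ Z' : W → W' → Prop,
      IsBisim (iterUpd M p ψ n) (iterUpd M' p ψ n) Z' ∧ Z' t t' :=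
  ⟨Z, bisim_iterUpd h p ψ hψ n, ht⟩
end

section
/- The translation T from PDL to MISL with multiple primitive modalities is truth-preserving: for every PDL formula φ and pointed model (M,s), M,s ⊨_PDL φ iff M,s ⊨_MISL T(φ), where T commutes with Booleans and atomic program modalities, T(⟨π1;π2⟩φ) = T(⟨π1⟩⟨π2⟩φ), T(⟨π1∪π2⟩φ) = T(⟨π1⟩φ) ∨ T(⟨π2⟩φ), and T(⟨π*⟩φ) = ⟨q:=T(φ);(q:=T(⟨π⟩q))*⟩q for a fresh variable q. -/
/-- A multi-modal Kripke model with atomic-program relations indexed by `Δ`. -/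
structure PModel (W : Type) (Δ : Type) where
  R : Δ → W → W → Prop
  V : ℕ → Set W

def PModel.update {W Δ : Type} (M : PModel W Δ) (p : ℕ) (S : Set W) : PModel W Δ :=
  ⟨M.R, fun q => if q = p then S else M.V q⟩

/-- PDL programs over atomic programs `Δ`. -/
inductive Prog (Δ : Type) : Type where
  | atom : Δ → Prog Δ
  | comp : Prog Δ → Prog Δ → Prog Δ
  | union : Prog Δ → Prog Δ → Prog Δ
  | star : Prog Δ → Prog Δ

/-- PDL formulas. -/
inductive PForm (Δ : Type) : Type where
  | atom : ℕ → PForm Δ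
  | neg : PForm Δ → PForm Δ
  | conj : PForm Δ → PForm Δ → PForm Δ
  | dia : Prog Δ → PForm Δ → PForm Δ

/-- Interpretation of PDL programs. -/
def progRel {W Δ : Type} (M : PModel W Δ) : Prog Δ → W → W → Prop
  | .atom a => M.R a
  | .comp π1 π2 => fun x z => ∃ y, progRel M π1 x y ∧ progRel M π2 y z
  | .union π1 π2 => fun x y => progRel M π1 x y ∨ progRel M π2 x y
  | .star π => Relation.ReflTransGen (progRel M π)

/-- PDL satisfaction. -/
def psat {W Δ : Type} (M : PModel W Δ) : W → PForm Δ → Prop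
  | w, .atom p => w ∈ M.V p
  | w, .neg φ => ¬ psat M w φ
  | w, .conj φ ψ => psat M w φ ∧ psat M w ψ
  | w, .dia π φ => ∃ v, progRel M π w v ∧ psat M v φ

/-- MISL(Δ) formulas: modal iterative substitution logic with a modality for each `a ∈ Δ`. -/
inductive MForm (Δ : Type) : Type where
  | atom : ℕ → MForm Δ
  | neg : MForm Δ → MForm Δ
  | conj : MForm Δ → MForm Δ → MForm Δ
  | dia : Δ → MForm Δ → MForm Δ
  | sub : ℕ → MForm Δ → MForm Δ → MForm Δ
  | isub : ℕ → MForm Δ → MForm Δ → MForm Δ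

def MForm.or {Δ : Type} (φ ψ : MForm Δ) : MForm Δ := .neg (.conj (.neg φ) (.neg ψ))

/-- MISL(Δ) satisfaction: `sub p ψ φ` is `⟨p:=ψ⟩φ`, `isub p ψ φ` is `⟨(p:=ψ)*⟩φ`. -/
def msat {W Δ : Type} : PModel W Δ → W → MForm Δ → Prop
  | M, w, .atom p => w ∈ M.V p
  | M, w, .neg φ => ¬ msat M w φ
  | M, w, .conj φ ψ => msat M w φ ∧ msat M w ψ
  | M, w, .dia a φ => ∃ v, M.R a w v ∧ msat M v φ
  | M, w, .sub p ψ φ => msat (M.update p {v | msat M v ψ}) w φ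
  | M, w, .isub p ψ φ =>
      ∃ n : ℕ, msat (M.update p ((fun S => {v | msat (M.update p S) v ψ})^[n] (M.V p))) w φ
termination_by M w φ => sizeOf φ
decreasing_by all_goals (simp_wf <;> omega)

/-- The propositional variable `q` occurs in the PDL formula. -/
def occursP {Δ : Type} (q : ℕ) : PForm Δ → Prop
  | .atom r => r = q
  | .neg φ => occursP q φ
  | .conj φ ψ => occursP q φ ∨ occursP q ψ
  | .dia _ φ => occursP q φ

def psz {Δ : Type} : Prog Δ → ℕ
  | .atom _ => 1
  | .comp π1 π2 => psz π1 + psz π2 + 1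
  | .union π1 π2 => psz π1 + psz π2 + 1
  | .star π => psz π + 1

def fsz {Δ : Type} : PForm Δ → ℕ
  | .atom _ => 0
  | .neg φ => fsz φ + 1
  | .conj φ ψ => fsz φ + fsz ψ + 1
  | .dia π φ => psz π + fsz φ

def maxVarP {Δ : Type} : PForm Δ → ℕ
  | .atom p => p
  | .neg φ => maxVarP φ
  | .conj φ ψ => max (maxVarP φ) (maxVarP ψ)
  | .dia _ φ => maxVarP φ

def pdlT {Δ : Type} : PForm Δ → MForm Δ
  | .atom p => .atom p
  | .neg φ => .neg (pdlT φ)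
  | .conj φ ψ => .conj (pdlT φ) (pdlT ψ)
  | .dia (.atom a) φ => .dia a (pdlT φ)
  | .dia (.comp π1 π2) φ => pdlT (.dia π1 (.dia π2 φ))
  | .dia (.union π1 π2) φ => MForm.or (pdlT (.dia π1 φ)) (pdlT (.dia π2 φ))
  | .dia (.star π) φ =>
      .sub (maxVarP φ + 1) (pdlT φ)
        (.isub (maxVarP φ + 1) (pdlT (.dia π (.atom (maxVarP φ + 1)))) (.atom (maxVarP φ + 1)))
termination_by φ => fsz φ
decreasing_by all_goals simp [fsz, psz] <;> omega

lemma occursP_le_maxVarP {Δ : Type} (q : ℕ) (φ : PForm Δ) (h : occursP q φ) : q ≤ maxVarP φ := by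
  induction φ with
  | atom p => simp [occursP] at h; simp [maxVarP, h]
  | neg φ ih => exact ih h
  | conj φ ψ ih1 ih2 =>
      rcases h with h | h
      · exact le_trans (ih1 h) (le_max_left _ _)
      · exact le_trans (ih2 h) (le_max_right _ _)
  | dia π φ ih => exact ih h

lemma update_update {W Δ : Type} (M : PModel W Δ) (p : ℕ) (A B : Set W) :
    (M.update p A).update p B = M.update p B := by
  simp only [PModel.update]
  congr 1
  funext q
  by_cases h : q = p <;> simp [h]

lemma update_V_self {W Δ : Type} (M : PModel W Δ) (p : ℕ) (S : Set W) :
    (M.update p S).V p = S := by simp [PModel.update]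

lemma progRel_update {W Δ : Type} (M : PModel W Δ) (p : ℕ) (S : Set W) (π : Prog Δ) :
    progRel (M.update p S) π = progRel M π := by
  induction π with
  | atom a => rfl
  | comp π1 π2 ih1 ih2 => simp [progRel, ih1, ih2]
  | union π1 π2 ih1 ih2 => simp [progRel, ih1, ih2]
  | star π ih => simp [progRel, ih]

lemma iter_mem_of_rtg {W : Type} (r : W → W → Prop) (S : Set W) :
    ∀ x y, Relation.ReflTransGen r x y → y ∈ S →
      ∃ n, x ∈ (fun T => {v | ∃ u, r v u ∧ u ∈ T})^[n] S := by
  intro x y h hy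
  induction h using Relation.ReflTransGen.head_induction_on with
  | refl => exact ⟨0, hy⟩
  | head hxz _ ih =>
      obtain ⟨n, hn⟩ := ih
      exact ⟨n + 1, by rw [Function.iterate_succ_apply']; exact ⟨_, hxz, hn⟩⟩

lemma rtg_of_iter_mem {W : Type} (r : W → W → Prop) (S : Set W) :
    ∀ n x, x ∈ (fun T => {v | ∃ u, r v u ∧ u ∈ T})^[n] S →
      ∃ y, Relation.ReflTransGen r x y ∧ y ∈ S := by
  intro n
  induction n with
  | zero => exact fun x hx => ⟨x, .refl, hx⟩
  | succ n ih =>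
      intro x hx
      rw [Function.iterate_succ_apply'] at hx
      obtain ⟨u, hxu, hu⟩ := hx
      obtain ⟨y, hy, hyS⟩ := ih u hu
      exact ⟨y, .head hxu hy, hyS⟩

lemma trans_correct {Δ : Type} : ∀ (n : ℕ) (φ : PForm Δ), fsz φ ≤ n →
    ∀ (W : Type) (M : PModel W Δ) (s : W), psat M s φ ↔ msat M s (pdlT φ) := by
  intro n
  induction n with
  | zero =>
      intro φ hφ W M s
      match φ with
      | .atom p => simp [pdlT, psat, msat]
      | .neg φ => simp [fsz] at hφ
      | .conj φ ψ => simp [fsz] at hφ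
      | .dia π φ => cases π <;> simp [fsz, psz] at hφ
  | succ n ih =>
      intro φ hφ W M s
      match φ with
      | .atom p => simp [pdlT, psat, msat]
      | .neg φ =>
          simp [fsz] at hφ
          simp only [pdlT, psat, msat]
          rw [ih φ (by omega) W M s]
      | .conj φ ψ =>
          simp [fsz] at hφ
          simp only [pdlT, psat, msat]
          rw [ih φ (by omega) W M s, ih ψ (by omega) W M s]
      | .dia (.atom a) φ =>
          simp [fsz, psz] at hφ
          simp only [pdlT, psat, msat, progRel]
          exact exists_congr fun v => and_congr_right fun _ => ih φ (by omega) W M v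
      | .dia (.comp π1 π2) φ =>
          simp [fsz, psz] at hφ
          rw [show pdlT (.dia (.comp π1 π2) φ) = pdlT (.dia π1 (.dia π2 φ)) from by
            rw [pdlT]]
          rw [← ih (.dia π1 (.dia π2 φ)) (by simp [fsz, psz]; omega) W M s]
          simp only [psat, progRel]
          constructor
          · rintro ⟨v, ⟨u, h1, h2⟩, hv⟩
            exact ⟨u, h1, v, h2, hv⟩
          · rintro ⟨u, h1, v, h2, hv⟩
            exact ⟨v, ⟨u, h1, h2⟩, hv⟩
      | .dia (.union π1 π2) φ =>
          simp [fsz, psz] at hφ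
          rw [show pdlT (.dia (.union π1 π2) φ)
              = MForm.or (pdlT (.dia π1 φ)) (pdlT (.dia π2 φ)) from by rw [pdlT]]
          rw [MForm.or]
          simp only [msat]
          rw [← ih (.dia π1 φ) (by simp [fsz]; omega) W M s,
              ← ih (.dia π2 φ) (by simp [fsz]; omega) W M s]
          simp only [psat, progRel]
          constructor
          · rintro ⟨v, h1 | h1, hv⟩
            · exact fun h => h.1 ⟨v, h1, hv⟩
            · exact fun h => h.2 ⟨v, h1, hv⟩
          · intro h
            by_contra hc
            push_neg at hc
            exact h ⟨fun ⟨v, h1, hv⟩ => hc v (.inl h1) hv,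
                     fun ⟨v, h1, hv⟩ => hc v (.inr h1) hv⟩
      | .dia (.star π) φ =>
          simp [fsz, psz] at hφ
          set q := maxVarP φ + 1 with hq
          rw [show pdlT (.dia (.star π) φ)
              = .sub q (pdlT φ) (.isub q (pdlT (.dia π (.atom q))) (.atom q)) from by
            rw [pdlT]]
          simp only [msat, update_update, update_V_self]
          have hS : {v | msat M v (pdlT φ)} = {v | psat M v φ} := by
            ext v; exact (ih φ (by omega) W M v).symm
          rw [hS]
          have hF : (fun S => {v | msat (M.update q S) v (pdlT (.dia π (.atom q)))})
              = (fun S => {v | ∃ u, progRel M π v u ∧ u ∈ S}) := by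
            funext S
            ext v
            rw [Set.mem_setOf_eq, ← ih (.dia π (.atom q)) (by simp [fsz]; omega) W
              (M.update q S) v]
            simp only [psat, progRel_update, Set.mem_setOf_eq]
            exact exists_congr fun u => and_congr_right fun _ => by
              simp [psat, update_V_self]
          rw [hF]
          simp only [psat, progRel]
          constructor
          · rintro ⟨v, hsv, hv⟩
            exact iter_mem_of_rtg _ _ s v hsv hv
          · rintro ⟨m, hm⟩
            obtain ⟨y, hy, hyS⟩ := rtg_of_iter_mem _ _ m s hm
            exact ⟨y, hy, hyS⟩

theorem stmt19 (Δ : Type) :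
    ∃ T : PForm Δ → MForm Δ,
      (∀ p : ℕ, T (.atom p) = .atom p) ∧
      (∀ φ, T (.neg φ) = .neg (T φ)) ∧
      (∀ φ ψ, T (.conj φ ψ) = .conj (T φ) (T ψ)) ∧
      (∀ (a : Δ) (φ : PForm Δ), T (.dia (.atom a) φ) = .dia a (T φ)) ∧
      (∀ π1 π2 φ, T (.dia (.comp π1 π2) φ) = T (.dia π1 (.dia π2 φ))) ∧
      (∀ π1 π2 φ, T (.dia (.union π1 π2) φ) = MForm.or (T (.dia π1 φ)) (T (.dia π2 φ))) ∧
      (∀ π φ, ∃ q : ℕ, ¬ occursP q (.dia (.star π) φ) ∧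
          T (.dia (.star π) φ) =
            .sub q (T φ) (.isub q (T (.dia π (.atom q))) (.atom q))) ∧
      (∀ (W : Type) (M : PModel W Δ) (s : W) (φ : PForm Δ),
          psat M s φ ↔ msat M s (T φ)) := by
  refine ⟨pdlT, fun p => by rw [pdlT], fun φ => by rw [pdlT], fun φ ψ => by rw [pdlT],
    fun a φ => by rw [pdlT], fun π1 π2 φ => by rw [pdlT], fun π1 π2 φ => by rw [pdlT],
    fun π φ => ⟨maxVarP φ + 1, ?_, by rw [pdlT]⟩,
    fun W M s φ => trans_correct (fsz φ) φ le_rfl W M s⟩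
  intro h
  have := occursP_le_maxVarP _ φ h
  omega
end
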